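/- arXiv:2206.10786 — 2 statements merged into one kernel-verified Lean document; each statement's English description precedes it below -/
import Mathlib

section
/- Let f : [a,b] → ℝ be continuous with Lipschitz constant L, let y_min and y_max be the minimum and maximum values of f on [a,b], and fix ε ∈ (1/2, 1]. Call a value y 'ε-high' if y ≥ y_min + ε(y_max − y_min). Suppose neither f(a) nor f(b) is ε-high, and assume f(a) ≤ f(b). If L < 2(ε(y_max − y_min) + y_min − f(a))/(b − a), then the Lebesgue measure of H = {x ∈ [a,b] : f(x) is ε-high} is strictly less than the Lebesgue measure of its complement [a,b] \ H. -/
open MeasureTheory Set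

theorem stmt0 (a b L ymin ymax ε : ℝ) (f : ℝ → ℝ)
    (hab : a < b)
    (hcont : ContinuousOn f (Set.Icc a b))
    (hlip : ∀ x ∈ Set.Icc a b, ∀ z ∈ Set.Icc a b, |f x - f z| ≤ L * |x - z|)
    (hmin : ∀ x ∈ Set.Icc a b, ymin ≤ f x)
    (hmin' : ∃ x ∈ Set.Icc a b, f x = ymin)
    (hmax : ∀ x ∈ Set.Icc a b, f x ≤ ymax)
    (hmax' : ∃ x ∈ Set.Icc a b, f x = ymax)
    (hε : ε ∈ Set.Ioc (1/2 : ℝ) 1)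
    (hfa : f a < ymin + ε * (ymax - ymin))
    (hfb : f b < ymin + ε * (ymax - ymin))
    (hfab : f a ≤ f b)
    (hL : L < 2 * (ε * (ymax - ymin) + ymin - f a) / (b - a)) :
    volume {x ∈ Set.Icc a b | ymin + ε * (ymax - ymin) ≤ f x}
      < volume (Set.Icc a b \ {x ∈ Set.Icc a b | ymin + ε * (ymax - ymin) ≤ f x}) := by
  set T := ymin + ε * (ymax - ymin) with hT
  have hba : (0:ℝ) < b - a := sub_pos.mpr hab
  have haI : a ∈ Set.Icc a b := ⟨le_refl a, le_of_lt hab⟩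
  -- L > 0
  have hLpos : 0 < L := by
    by_contra h
    push_neg at h
    obtain ⟨xM, hxM, hfxM⟩ := hmax'
    obtain ⟨xm, hxm, hfxm⟩ := hmin'
    have h1 := hlip xM hxM xm hxm
    have h2 : L * |xM - xm| ≤ 0 := mul_nonpos_of_nonpos_of_nonneg h (abs_nonneg _)
    have h3 : |f xM - f xm| ≤ 0 := h1.trans h2
    have h4 : ymax = ymin := by
      have := abs_nonneg (f xM - f xm)
      have : f xM - f xm = 0 := le_antisymm h3 (abs_nonneg _) ▸ (abs_eq_zero.mp (le_antisymm h3 (abs_nonneg _)))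
      rw [hfxM, hfxm] at this; linarith
    have := hmin a haI
    rw [hT, h4] at hfa
    nlinarith
  have hTfa : 0 < T - f a := sub_pos.mpr hfa
  set d := (T - f a) / L with hd
  have hdhalf : (b - a) / 2 < d := by
    rw [hd, lt_div_iff₀ hLpos]
    rw [lt_div_iff₀ hba] at hL
    nlinarith
  have hdpos : 0 < d := lt_of_le_of_lt (by linarith) hdhalf
  set H := {x ∈ Set.Icc a b | T ≤ f x} with hH
  -- H ⊆ Icc (a+d) b
  have hHsub : H ⊆ Set.Icc (a + d) b := by
    rintro x ⟨hx, hfx⟩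
    refine ⟨?_, hx.2⟩
    have h1 : T - f a ≤ |f x - f a| := by
      rw [abs_of_nonneg (by linarith)]
      linarith
    have h2 := (hlip x hx a haI).trans' h1
    rw [abs_of_nonneg (by linarith [hx.1] : (0:ℝ) ≤ x - a)] at h2
    have : d ≤ x - a := (div_le_iff₀ hLpos).mpr (by linarith)
    linarith
  -- Ico a (min (a+d) b) ⊆ complement
  have hCsub : Set.Ico a (min (a + d) b) ⊆ Set.Icc a b \ H := by
    rintro x ⟨hx1, hx2⟩
    have hxb : x < b := lt_of_lt_of_le hx2 (min_le_right _ _)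
    have hxd : x < a + d := lt_of_lt_of_le hx2 (min_le_left _ _)
    refine ⟨⟨hx1, le_of_lt hxb⟩, ?_⟩
    intro hxH
    have := (hHsub hxH).1
    linarith
  have hvolH : volume H ≤ ENNReal.ofReal (b - (a + d)) := by
    calc volume H ≤ volume (Set.Icc (a + d) b) := measure_mono hHsub
    _ = ENNReal.ofReal (b - (a + d)) := Real.volume_Icc
  have hvolC : ENNReal.ofReal (min (a + d) b - a) ≤ volume (Set.Icc a b \ H) := by
    calc ENNReal.ofReal (min (a + d) b - a) = volume (Set.Ico a (min (a + d) b)) :=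
          Real.volume_Ico.symm
    _ ≤ volume (Set.Icc a b \ H) := measure_mono hCsub
  refine lt_of_le_of_lt hvolH (lt_of_lt_of_le ?_ hvolC)
  have hminpos : 0 < min (a + d) b - a := by
    rcases min_cases (a + d) b with ⟨h, _⟩ | ⟨h, _⟩ <;> rw [h] <;> linarith
  rw [ENNReal.ofReal_lt_ofReal_iff hminpos]
  rcases min_cases (a + d) b with ⟨h, _⟩ | ⟨h, _⟩ <;> rw [h] <;> linarith
end

section
/- Let f : ∏_{i=1}^{D}[a_i,b_i] → ℝ be continuous on a product of compact intervals, Lipschitz with constant L w.r.t. the Euclidean norm, such that no boundary point of the hypercube is ε-high, and L < 2(ε(y_max − y_min) + y_min − M_1)/(b_1 − a_1), where M_1 = max over the face x_1 = a_1 of f and y_min, y_max are the global min and max of f. Assume the 1-dimensional statement: every slice function of one variable satisfying the analogous hypotheses has superlevel set of measure at most half the interval. Then the set H of ε-high points satisfies μ_D(H) ≤ μ_D(Hᶜ). -/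
/-! Projecting a high point `x` onto the face `x 0 = A 0` moves it by `x 0 - A 0` and lands on a
point where `f ≤ M1`, so the Lipschitz bound forces `τ - M1 ≤ L (x 0 - A 0)`, where
`τ = ymin + ε (ymax - ymin)`. The bound on `L` turns this into `x 0 > (A 0 + B 0) / 2`: all high
points lie in the right half of the box, whose volume equals that of the left half, which is
entirely low. -/

open MeasureTheory Set

section EuclideanBox

variable {ι : Type*}

def euclideanBox (A B : ι → ℝ) : Set (EuclideanSpace ℝ ι) :=
  {x | ∀ i, x i ∈ Icc (A i) (B i)}

theorem toLp_update_mem_euclideanBox [DecidableEq ι] {A B : ι → ℝ} {x : EuclideanSpace ℝ ι}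
    (hx : x ∈ euclideanBox A B) (i : ι) {a : ℝ} (ha : a ∈ Icc (A i) (B i)) :
    WithLp.toLp 2 (Function.update x.ofLp i a) ∈ euclideanBox A B := by
  intro j
  rcases eq_or_ne j i with rfl | hj
  · simpa using ha
  · simpa [Function.update_of_ne hj] using hx j

variable [Fintype ι]

theorem volume_euclideanBox (A B : ι → ℝ) :
    volume (euclideanBox A B) = ∏ i, ENNReal.ofReal (B i - A i) := by
  have hpre : euclideanBox A B =
      (MeasurableEquiv.toLp 2 (ι → ℝ)).symm ⁻¹' univ.pi fun i => Icc (A i) (B i) := by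
    ext x
    simp only [euclideanBox, mem_ofPred_eq, mem_preimage, mem_pi, mem_univ, true_implies]
    rfl
  rw [hpre, (EuclideanSpace.volume_preserving_symm_measurableEquiv_toLp ι).measure_preimage
    (MeasurableSet.univ_pi fun _ => measurableSet_Icc).nullMeasurableSet, volume_pi_pi]
  simp [Real.volume_Icc]

variable [DecidableEq ι]

theorem dist_toLp_update_self (x : EuclideanSpace ℝ ι) (i : ι) (a : ℝ) :
    dist x (WithLp.toLp 2 (Function.update x.ofLp i a)) = |x i - a| := by
  rw [EuclideanSpace.dist_eq, Finset.sum_eq_single i, Real.dist_eq, Real.sqrt_sq_eq_abs]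
  · simp
  · intro j _ hj
    simp [Function.update_of_ne hj]
  · simp

theorem volume_le_volume_diff_of_midpoint_lt (A B : ι → ℝ) (i : ι) {S : Set (EuclideanSpace ℝ ι)}
    (hS : S ⊆ euclideanBox A B) (hright : ∀ x ∈ S, (A i + B i) / 2 < x i) :
    volume S ≤ volume (euclideanBox A B \ S) := by
  set m := (A i + B i) / 2 with hm
  have hS_right : S ⊆ euclideanBox (Function.update A i m) B := by
    intro x hx j
    rcases eq_or_ne j i with rfl | hj
    · simpa using ⟨(hright x hx).le, (hS hx j).2⟩
    · simpa [Function.update_of_ne hj] using hS hx j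
  have hleft_low : euclideanBox A (Function.update B i m) ⊆ euclideanBox A B \ S := by
    have hleft : ∀ x ∈ euclideanBox A (Function.update B i m), x i ≤ m := fun x hx => by
      simpa using (hx i).2
    refine fun x hx => ⟨fun j => ?_, fun hxS => (hright x hxS).not_ge (hleft x hx)⟩
    rcases eq_or_ne j i with rfl | hj
    · have := hx j
      simp only [Function.update_self, mem_Icc] at this
      exact ⟨this.1, by linarith [this.2, this.1, hm]⟩
    · simpa [Function.update_of_ne hj] using hx j
  have hhalves : volume (euclideanBox (Function.update A i m) B) =
      volume (euclideanBox A (Function.update B i m)) := by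
    rw [volume_euclideanBox, volume_euclideanBox]
    refine Finset.prod_congr rfl fun j _ => ?_
    rcases eq_or_ne j i with rfl | hj
    · simp only [Function.update_self, m]
      ring_nf
    · simp [Function.update_of_ne hj]
  calc volume S ≤ volume (euclideanBox (Function.update A i m) B) := measure_mono hS_right
    _ = volume (euclideanBox A (Function.update B i m)) := hhalves
    _ ≤ volume (euclideanBox A B \ S) := measure_mono hleft_low

end EuclideanBox

theorem midpoint_lt_of_gap_le_mul {L a b t gap : ℝ} (hab : a < b) (ht : a ≤ t) (hgap : 0 < gap)
    (hgap_le : gap ≤ L * (t - a)) (hL : L < 2 * gap / (b - a)) : (a + b) / 2 < t := by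
  have hL_pos : 0 < L := by
    by_contra! hL_nonpos
    nlinarith [mul_nonpos_of_nonpos_of_nonneg hL_nonpos (sub_nonneg.2 ht)]
  have hL' : L * (b - a) < 2 * gap := (lt_div_iff₀ (sub_pos.2 hab)).1 hL
  nlinarith

theorem stmt15_general (d : ℕ) (L ymin ymax ε M1 : ℝ)
    (A B : Fin (d + 1) → ℝ) (hAB : ∀ i, A i < B i)
    (f : EuclideanSpace ℝ (Fin (d + 1)) → ℝ)
    (Box : Set (EuclideanSpace ℝ (Fin (d + 1))))
    (hBox : Box = {x | ∀ i, x i ∈ Set.Icc (A i) (B i)})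
    (hlip : ∀ x ∈ Box, ∀ z ∈ Box, |f x - f z| ≤ L * dist x z)
    (hbdry : ∀ x ∈ Box, (∃ i, x i = A i ∨ x i = B i) →
      f x < ymin + ε * (ymax - ymin))
    (hM1 : ∀ x ∈ Box, x 0 = A 0 → f x ≤ M1)
    (hM1' : ∃ x ∈ Box, x 0 = A 0 ∧ f x = M1)
    (hL : L < 2 * (ε * (ymax - ymin) + ymin - M1) / (B 0 - A 0)) :
    volume {x ∈ Box | ymin + ε * (ymax - ymin) ≤ f x}
      ≤ volume (Box \ {x ∈ Box | ymin + ε * (ymax - ymin) ≤ f x}) := by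
  obtain rfl : Box = euclideanBox A B := hBox
  obtain ⟨w, hw, hw0, rfl⟩ := hM1'
  have hgap : 0 < ymin + ε * (ymax - ymin) - f w := by
    linarith [hbdry w hw ⟨0, Or.inl hw0⟩]
  refine volume_le_volume_diff_of_midpoint_lt A B 0 (fun x hx => hx.1) ?_
  rintro x ⟨hx, hx_high⟩
  set z := WithLp.toLp 2 (Function.update x.ofLp 0 (A 0))
  have hz : z ∈ euclideanBox A B := toLp_update_mem_euclideanBox hx 0 ⟨le_rfl, (hAB 0).le⟩
  have hfz : f z ≤ f w := hM1 z hz (by simp [z])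
  refine midpoint_lt_of_gap_le_mul (hAB 0) (hx 0).1 hgap ?_ (by convert hL using 2; ring)
  calc ymin + ε * (ymax - ymin) - f w ≤ |f x - f z| := by linarith [le_abs_self (f x - f z)]
    _ ≤ L * dist x z := hlip x hx z hz
    _ = L * (x 0 - A 0) := by rw [dist_toLp_update_self, abs_of_nonneg (sub_nonneg.2 (hx 0).1)]

theorem stmt15 (d : ℕ) (L ymin ymax ε M1 : ℝ)
    (A B : Fin (d + 1) → ℝ) (hAB : ∀ i, A i < B i)
    (f : EuclideanSpace ℝ (Fin (d + 1)) → ℝ)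
    (Box : Set (EuclideanSpace ℝ (Fin (d + 1))))
    (hBox : Box = {x | ∀ i, x i ∈ Set.Icc (A i) (B i)})
    (hcont : ContinuousOn f Box)
    (hlip : ∀ x ∈ Box, ∀ z ∈ Box, |f x - f z| ≤ L * dist x z)
    (hmin : ∀ x ∈ Box, ymin ≤ f x) (hmin' : ∃ x ∈ Box, f x = ymin)
    (hmax : ∀ x ∈ Box, f x ≤ ymax) (hmax' : ∃ x ∈ Box, f x = ymax)
    (hε : ε ∈ Set.Ioc (1/2 : ℝ) 1)
    (hbdry : ∀ x ∈ Box, (∃ i, x i = A i ∨ x i = B i) →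
      f x < ymin + ε * (ymax - ymin))
    (hM1 : ∀ x ∈ Box, x 0 = A 0 → f x ≤ M1)
    (hM1' : ∃ x ∈ Box, x 0 = A 0 ∧ f x = M1)
    (hL : L < 2 * (ε * (ymax - ymin) + ymin - M1) / (B 0 - A 0))
    -- the assumed one-dimensional statement
    (h1d : ∀ (g : ℝ → ℝ) (u v ℓ gmin gmax : ℝ),
      u < v →
      ContinuousOn g (Set.Icc u v) →
      (∀ x ∈ Set.Icc u v, ∀ z ∈ Set.Icc u v, |g x - g z| ≤ ℓ * |x - z|) →
      (∀ x ∈ Set.Icc u v, gmin ≤ g x) → (∃ x ∈ Set.Icc u v, g x = gmin) →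
      (∀ x ∈ Set.Icc u v, g x ≤ gmax) → (∃ x ∈ Set.Icc u v, g x = gmax) →
      g u < gmin + ε * (gmax - gmin) →
      g v < gmin + ε * (gmax - gmin) →
      ℓ < 2 * (ε * (gmax - gmin) + gmin - min (g u) (g v)) / (v - u) →
      volume {x ∈ Set.Icc u v | gmin + ε * (gmax - gmin) ≤ g x}
        ≤ volume (Set.Icc u v \ {x ∈ Set.Icc u v | gmin + ε * (gmax - gmin) ≤ g x})) :
    volume {x ∈ Box | ymin + ε * (ymax - ymin) ≤ f x}
      ≤ volume (Box \ {x ∈ Box | ymin + ε * (ymax - ymin) ≤ f x}) :=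
  stmt15_general d L ymin ymax ε M1 A B hAB f Box hBox hlip hbdry hM1 hM1' hL
end
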